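/- arXiv:2210.09128 — 2 statements merged into one kernel-verified Lean document; each statement's English description precedes it below -/
import Mathlib

section
/- Let Â and A be p × R real matrices with orthonormal columns. Then ‖(Â Â^T − I_p) A‖_F² = R − tr((A^T Â)(A^T Â)^T), and ‖(Â Â^T − I_p) A‖_F ≤ ‖Â − A‖_F. -/
open Matrix

/-- Frobenius norm of a real matrix. -/
noncomputable def frobNorm {m n : Type*} [Fintype m] [Fintype n] (M : Matrix m n ℝ) : ℝ :=
  Real.sqrt (∑ i, ∑ j, (M i j) ^ 2)

lemma frob_sum_eq_trace {m n : Type*} [Fintype m] [Fintype n] (M : Matrix m n ℝ) :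
    (∑ i, ∑ j, (M i j) ^ 2) = Matrix.trace (Mᵀ * M) := by
  simp only [Matrix.trace, Matrix.mul_apply, Matrix.diag, Matrix.transpose_apply, sq]
  exact Finset.sum_comm

lemma frob_sq {m n : Type*} [Fintype m] [Fintype n] (M : Matrix m n ℝ) :
    frobNorm M ^ 2 = Matrix.trace (Mᵀ * M) := by
  rw [frobNorm, Real.sq_sqrt (by positivity), frob_sum_eq_trace]

lemma trace_mul_self_transpose_nonneg {m n : Type*} [Fintype m] [Fintype n]
    (N : Matrix m n ℝ) : 0 ≤ Matrix.trace (N * Nᵀ) := by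
  simp only [Matrix.trace, Matrix.diag, Matrix.mul_apply, Matrix.transpose_apply]
  refine Finset.sum_nonneg fun i _ => Finset.sum_nonneg fun j _ => mul_self_nonneg _

theorem stmt6 (p R : ℕ) (Ahat A : Matrix (Fin p) (Fin R) ℝ)
    (hAhat : Ahatᵀ * Ahat = 1) (hA : Aᵀ * A = 1) :
    frobNorm ((Ahat * Ahatᵀ - 1) * A) ^ 2 =
        (R : ℝ) - Matrix.trace ((Aᵀ * Ahat) * (Aᵀ * Ahat)ᵀ) ∧
    frobNorm ((Ahat * Ahatᵀ - 1) * A) ≤ frobNorm (Ahat - A) := by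
  set M := Aᵀ * Ahat with hM
  have h1 : Ahat * Ahatᵀ * (Ahat * Ahatᵀ) = Ahat * Ahatᵀ := by
    rw [Matrix.mul_assoc Ahat, ← Matrix.mul_assoc Ahatᵀ, hAhat, Matrix.one_mul]
  have hP : (Ahat * Ahatᵀ - 1) * (Ahat * Ahatᵀ - 1) = 1 - Ahat * Ahatᵀ := by
    rw [Matrix.sub_mul, Matrix.mul_sub, Matrix.mul_sub, Matrix.one_mul, Matrix.mul_one, h1, Matrix.one_mul]
    abel
  have hTrans : (Ahat * Ahatᵀ - 1)ᵀ = Ahat * Ahatᵀ - 1 := by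
    simp [Matrix.transpose_sub, Matrix.transpose_mul]
  have hBtB : ((Ahat * Ahatᵀ - 1) * A)ᵀ * ((Ahat * Ahatᵀ - 1) * A)
      = 1 - M * Mᵀ := by
    rw [Matrix.transpose_mul, hTrans, Matrix.mul_assoc,
      ← Matrix.mul_assoc (Ahat * Ahatᵀ - 1), hP, Matrix.sub_mul, Matrix.one_mul,
      Matrix.mul_sub, hA, hM, Matrix.transpose_mul, Matrix.transpose_transpose]
    simp only [Matrix.mul_assoc]
  have htr1 : Matrix.trace (1 : Matrix (Fin R) (Fin R) ℝ) = (R : ℝ) := by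
    simp
  have eq1 : frobNorm ((Ahat * Ahatᵀ - 1) * A) ^ 2
      = (R : ℝ) - Matrix.trace (M * Mᵀ) := by
    rw [frob_sq, hBtB, Matrix.trace_sub, htr1]
  refine ⟨eq1, ?_⟩
  -- second inequality via sums
  have hDtD : (Ahat - A)ᵀ * (Ahat - A) = 1 + 1 - Mᵀ - M := by
    simp only [Matrix.transpose_sub, Matrix.sub_mul, Matrix.mul_sub, hAhat, hA, hM,
      Matrix.transpose_mul, Matrix.transpose_transpose]
    abel
  have key : Matrix.trace (((Ahat * Ahatᵀ - 1) * A)ᵀ * ((Ahat * Ahatᵀ - 1) * A))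
      ≤ Matrix.trace ((Ahat - A)ᵀ * (Ahat - A)) := by
    rw [hBtB, hDtD]
    have hnn : 0 ≤ Matrix.trace ((M - 1) * (M - 1)ᵀ) :=
      trace_mul_self_transpose_nonneg (M - 1)
    have hexp : (M - 1) * (M - 1)ᵀ = M * Mᵀ - M - Mᵀ + 1 := by
      simp only [Matrix.transpose_sub, Matrix.transpose_one, Matrix.sub_mul,
        Matrix.mul_sub, Matrix.mul_one, Matrix.one_mul]
      abel
    rw [hexp] at hnn
    simp only [Matrix.trace_add, Matrix.trace_sub] at hnn ⊢
    have htrT : Matrix.trace Mᵀ = Matrix.trace M := Matrix.trace_transpose M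
    linarith
  rw [← frob_sum_eq_trace, ← frob_sum_eq_trace] at key
  exact Real.sqrt_le_sqrt key
end

section
/- Let X ∈ R^{n×(D'D'')} satisfy the 2R-RIP with constant δ ∈ (0,1). Let Â ∈ R^{D'×R} have orthonormal columns and define Σ ∈ R^{(R D'')×(R D'')} with (u,v)-block Σ_{uv} = (1/n) Σᵢ X̃ᵢ^T â_u â_v^T X̃ᵢ, where X̃ᵢ = vec⁻¹ of the i-th row of X reshaped to D'×D'' and â_u is the u-th column of Â. Then for every w ∈ R^{R D''} with ‖w‖₂ = 1, w^T Σ w ≥ 1 − δ; consequently Σ is invertible and ‖Σ⁻¹‖_op ≤ 1/(1−δ). -/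
/-!
With `K = Â ⊗ I` we have `Σ = (1/n) (XK)ᵀ(XK)`, so `wᵀΣw = (1/n) ‖X (Kw)‖²`, and `Kw` is the
(row-major) vectorization of `ÂW`, where `W` is `w` reshaped to `R × D''`. Since `ÂᵀÂ = 1`, `K` is an
isometry, so `‖ÂW‖_F = ‖w‖`; as `ÂW` has rank at most `R`, the lower RIP bound gives
`wᵀΣw ≥ (1 - δ) ‖w‖²`. Such a coercive matrix is injective, and by Cauchy–Schwarz
`(1 - δ) ‖x‖ ≤ ‖Σx‖`, which bounds `‖Σ⁻¹‖`.
-/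

open Matrix

noncomputable def opNorm {m n : Type*} [Fintype m] [Fintype n] [DecidableEq n]
    (M : Matrix m n ℝ) : ℝ :=
  ‖LinearMap.toContinuousLinearMap (Matrix.toEuclideanLin M)‖

def RIP (n D1 D2 : ℕ) (X : Matrix (Fin n) (Fin D1 × Fin D2) ℝ) (r : ℕ) (δ : ℝ) : Prop :=
  ∀ M : Matrix (Fin D1) (Fin D2) ℝ, M.rank ≤ r →
    (1 - δ) * frobNorm M ^ 2 ≤
        (1 / (n : ℝ)) * ∑ i, (X.mulVec (fun jk => M jk.1 jk.2) i) ^ 2 ∧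
    (1 / (n : ℝ)) * ∑ i, (X.mulVec (fun jk => M jk.1 jk.2) i) ^ 2 ≤
        (1 + δ) * frobNorm M ^ 2

open scoped Kronecker

namespace Matrix

variable {R : Type*} [CommSemiring R]

theorem dotProduct_transpose_mul_self_mulVec {m n : Type*} [Fintype m] [Fintype n]
    (T : Matrix m n R) (w : n → R) : w ⬝ᵥ (Tᵀ * T) *ᵥ w = T *ᵥ w ⬝ᵥ T *ᵥ w := by
  rw [← mulVec_mulVec, dotProduct_transpose_mulVec]

theorem dotProduct_mulVec_self_of_transpose_mul_self_eq_one {m n : Type*} [Fintype m]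
    [Fintype n] [DecidableEq n] {K : Matrix m n R} (hK : Kᵀ * K = 1) (w : n → R) :
    K *ᵥ w ⬝ᵥ K *ᵥ w = w ⬝ᵥ w := by
  rw [← dotProduct_transpose_mul_self_mulVec, hK, one_mulVec]

theorem transpose_kronecker_one_mul_self {m n p : Type*} [Fintype m] [DecidableEq n]
    [Fintype p] [DecidableEq p] {A : Matrix m n R} (hA : Aᵀ * A = 1) :
    (A ⊗ₖ (1 : Matrix p p R))ᵀ * (A ⊗ₖ (1 : Matrix p p R)) = 1 := by
  rw [← kroneckerMap_transpose, transpose_one, ← mul_kronecker_mul, hA, one_mul,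
    one_kronecker_one]

theorem kronecker_one_mulVec {m n p : Type*} [Fintype n] [Fintype p] [DecidableEq p]
    (A : Matrix m n R) (w : n × p → R) :
    (A ⊗ₖ (1 : Matrix p p R)) *ᵥ w = fun jk => (A * of (Function.curry w)) jk.1 jk.2 := by
  ext ⟨j, k⟩
  simp [mulVec, dotProduct, mul_apply, one_apply, Fintype.sum_prod_type]

theorem mul_kronecker_one_apply {l m n p : Type*} [Fintype m] [Fintype p] [DecidableEq p]
    (X : Matrix l (m × p) R) (A : Matrix m n R) (i : l) (u : n) (a : p) :
    (X * (A ⊗ₖ (1 : Matrix p p R))) i (u, a) = ∑ j, X i (j, a) * A j u := by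
  simp [mul_apply, one_apply, Fintype.sum_prod_type]

end Matrix

theorem frobNorm_sq {m n : Type*} [Fintype m] [Fintype n] (M : Matrix m n ℝ) :
    frobNorm M ^ 2 = (fun jk : m × n => M jk.1 jk.2) ⬝ᵥ (fun jk => M jk.1 jk.2) := by
  rw [frobNorm, Real.sq_sqrt (by positivity), dotProduct, Fintype.sum_prod_type]
  simp only [sq]

section Coercive

variable {ι : Type*} [Fintype ι] [DecidableEq ι] {S : Matrix ι ι ℝ} {c : ℝ}

theorem Matrix.mul_norm_le_norm_toEuclideanLin (hS : ∀ w, c * (w ⬝ᵥ w) ≤ w ⬝ᵥ S *ᵥ w)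
    (x : EuclideanSpace ℝ ι) : c * ‖x‖ ≤ ‖toEuclideanLin S x‖ := by
  have h : c * ‖x‖ ^ 2 ≤ ‖x‖ * ‖toEuclideanLin S x‖ :=
    calc c * ‖x‖ ^ 2 = c * (x.ofLp ⬝ᵥ x.ofLp) := by
          rw [← real_inner_self_eq_norm_sq, EuclideanSpace.inner_eq_star_dotProduct, star_trivial]
      _ ≤ x.ofLp ⬝ᵥ S *ᵥ x.ofLp := hS _
      _ = inner ℝ x (toEuclideanLin S x) := by
          rw [EuclideanSpace.inner_eq_star_dotProduct, star_trivial, dotProduct_comm]; rfl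
      _ ≤ ‖x‖ * ‖toEuclideanLin S x‖ := real_inner_le_norm _ _
  rcases (norm_nonneg x).eq_or_lt with hx | hx
  · rw [← hx, mul_zero]
    exact norm_nonneg _
  · nlinarith

theorem Matrix.isUnit_of_coercive (hc : 0 < c) (hS : ∀ w, c * (w ⬝ᵥ w) ≤ w ⬝ᵥ S *ᵥ w) :
    IsUnit S := by
  refine mulVec_injective_iff_isUnit.mp fun a b hab => sub_eq_zero.mp ?_
  have h := hS (a - b)
  rw [mulVec_sub, hab, sub_self, dotProduct_zero] at h
  exact dotProduct_self_eq_zero.mp <| le_antisymm (nonpos_of_mul_nonpos_right h hc)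
    (Finset.sum_nonneg fun i _ => mul_self_nonneg _)

theorem opNorm_inv_le_of_coercive (hc : 0 < c) (hS : ∀ w, c * (w ⬝ᵥ w) ≤ w ⬝ᵥ S *ᵥ w) :
    opNorm S⁻¹ ≤ 1 / c := by
  have hSS : S * S⁻¹ = 1 := mul_nonsing_inv S ((isUnit_iff_isUnit_det S).mp
    (isUnit_of_coercive hc hS))
  refine ContinuousLinearMap.opNorm_le_bound _ (by positivity) fun y => ?_
  have h := mul_norm_le_norm_toEuclideanLin hS (toEuclideanLin S⁻¹ y)
  have hy : toEuclideanLin S (toEuclideanLin S⁻¹ y) = y := by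
    simp [toLpLin_apply, mulVec_mulVec, hSS]
  rw [hy] at h
  rw [one_div_mul_eq_div, le_div_iff₀ hc, mul_comm]
  exact h

end Coercive

theorem RIP.one_sub_mul_dotProduct_le {n D1 D2 r R : ℕ} {X : Matrix (Fin n) (Fin D1 × Fin D2) ℝ} {δ : ℝ}
    (hRIP : RIP n D1 D2 X r δ) (hR : R ≤ r) {A : Matrix (Fin D1) (Fin R) ℝ} (hA : Aᵀ * A = 1)
    (w : Fin R × Fin D2 → ℝ) :
    (1 - δ) * (w ⬝ᵥ w) ≤
      1 / (n : ℝ) * ((X * (A ⊗ₖ (1 : Matrix (Fin D2) (Fin D2) ℝ))) *ᵥ w ⬝ᵥ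
        (X * (A ⊗ₖ (1 : Matrix (Fin D2) (Fin D2) ℝ))) *ᵥ w) := by
  set M := A * of (Function.curry w)
  have hrank : M.rank ≤ r := (rank_mul_le_left _ _).trans ((rank_le_width A).trans hR)
  have hvec : (A ⊗ₖ 1) *ᵥ w = fun jk => M jk.1 jk.2 := kronecker_one_mulVec A w
  have hfrob : frobNorm M ^ 2 = w ⬝ᵥ w := by
    rw [frobNorm_sq, ← hvec,
      dotProduct_mulVec_self_of_transpose_mul_self_eq_one (transpose_kronecker_one_mul_self hA)]
  have h := (hRIP M hrank).1
  rw [hfrob] at h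
  rw [← mulVec_mulVec, hvec]
  simpa only [dotProduct, sq] using h

theorem stmt9_general (n D1 D2 R : ℕ) (X : Matrix (Fin n) (Fin D1 × Fin D2) ℝ)
    (δ : ℝ) (hδ : 0 < δ ∧ δ < 1) (hRIP : RIP n D1 D2 X (2 * R) δ)
    (Ahat : Matrix (Fin D1) (Fin R) ℝ) (hAhat : Ahatᵀ * Ahat = 1)
    (S : Matrix (Fin R × Fin D2) (Fin R × Fin D2) ℝ)
    (hS : ∀ u v a b, S (u, a) (v, b) =
      (1 / (n : ℝ)) * ∑ i, (∑ j, X i (j, a) * Ahat j u) * (∑ j, X i (j, b) * Ahat j v)) :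
    (∀ w : Fin R × Fin D2 → ℝ, (∑ x, w x ^ 2) = 1 →
        1 - δ ≤ ∑ x, w x * S.mulVec w x) ∧
    IsUnit S ∧ opNorm S⁻¹ ≤ 1 / (1 - δ) := by
  set T := X * (Ahat ⊗ₖ (1 : Matrix (Fin D2) (Fin D2) ℝ))
  have hST : S = (1 / (n : ℝ)) • (Tᵀ * T) := by
    ext ⟨u, a⟩ ⟨v, b⟩
    rw [hS, Matrix.smul_apply, smul_eq_mul, mul_apply]
    simp only [transpose_apply, T, mul_kronecker_one_apply]
  have key : ∀ w, (1 - δ) * (w ⬝ᵥ w) ≤ w ⬝ᵥ S *ᵥ w := fun w => by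
    rw [hST, smul_mulVec, dotProduct_smul, dotProduct_transpose_mul_self_mulVec,
      smul_eq_mul]
    exact hRIP.one_sub_mul_dotProduct_le (by omega) hAhat w
  have hc : 0 < 1 - δ := by linarith [hδ.2]
  refine ⟨fun w hw => ?_, isUnit_of_coercive hc key, opNorm_inv_le_of_coercive hc key⟩
  have hw' : w ⬝ᵥ w = 1 := by simpa only [dotProduct, sq] using hw
  have h := key w
  rwa [hw', mul_one] at h

theorem stmt9 (n D1 D2 R : ℕ) (hn : 0 < n) (X : Matrix (Fin n) (Fin D1 × Fin D2) ℝ)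
    (δ : ℝ) (hδ : 0 < δ ∧ δ < 1) (hRIP : RIP n D1 D2 X (2 * R) δ)
    (Ahat : Matrix (Fin D1) (Fin R) ℝ) (hAhat : Ahatᵀ * Ahat = 1)
    (S : Matrix (Fin R × Fin D2) (Fin R × Fin D2) ℝ)
    (hS : ∀ u v a b, S (u, a) (v, b) =
      (1 / (n : ℝ)) * ∑ i, (∑ j, X i (j, a) * Ahat j u) * (∑ j, X i (j, b) * Ahat j v)) :
    (∀ w : Fin R × Fin D2 → ℝ, (∑ x, w x ^ 2) = 1 →
        1 - δ ≤ ∑ x, w x * S.mulVec w x) ∧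
    IsUnit S ∧ opNorm S⁻¹ ≤ 1 / (1 - δ) :=
  stmt9_general n D1 D2 R X δ hδ hRIP Ahat hAhat S hS
end
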